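/- arXiv:1710.10293 — 3 statements merged into one kernel-verified Lean document; each statement's English description precedes it below -/
import Mathlib

section
/- Let q_{α,β}(x) = αx² + 2βx + 1 − (2/3)α for real parameters α, β. Then q_{α,β}(x) ≥ 0 for all x ∈ [−1,1] if and only if both 2|β| ≤ 1 + α/3 and (α ≤ |β| or β² ≤ α − (2/3)α²). -/
/-!
Write `f x = a x² + b x + c`; the endpoint values are `f 1 = a + b + c` and `f (-1) = a - b + c`.
If `a ≤ 0`, `f` is concave and lies above its chord on `[-1, 1]`. If `a > 0` and the vertex
`-b / (2a)` lies outside `(-1, 1)`, i.e. `2a ≤ |b|`, then `f` is monotone on `[-1, 1]` and its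
minimum there is an endpoint value. Otherwise the vertex lies in `[-1, 1]`, and
`4a f(x) = (2ax + b)² - discrim a b c` shows that `f` is nonnegative at the vertex, hence
everywhere, exactly when the discriminant is nonpositive. For `q_{α,β}` we have `a = α`, `b = 2β`,
`c = 1 - 2α/3`.
-/

open Set

lemma four_mul_quadratic_eq {R : Type*} [CommRing R] (a b c x : R) :
    4 * a * (a * x ^ 2 + b * x + c) = (2 * a * x + b) ^ 2 - discrim a b c := by
  rw [discrim]; ring

section OrderedField

variable {K : Type*} [Field K] [LinearOrder K] [IsStrictOrderedRing K] {a b c x : K}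

lemma quadratic_nonneg_on_Icc_of_nonpos (ha : a ≤ 0) (h₁ : 0 ≤ a + b + c) (h₂ : 0 ≤ a - b + c)
    (hx : x ∈ Icc (-1 : K) 1) : 0 ≤ a * x ^ 2 + b * x + c := by
  have hchord : a * x ^ 2 + b * x + c
      = ((1 + x) * (a + b + c) + (1 - x) * (a - b + c)) / 2 - a * ((1 + x) * (1 - x)) := by ring
  have hchord_nonneg : 0 ≤ (1 + x) * (a + b + c) + (1 - x) * (a - b + c) :=
    add_nonneg (mul_nonneg (by linarith [hx.1]) h₁) (mul_nonneg (by linarith [hx.2]) h₂)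
  have hbulge : a * ((1 + x) * (1 - x)) ≤ 0 :=
    mul_nonpos_of_nonpos_of_nonneg ha (mul_nonneg (by linarith [hx.1]) (by linarith [hx.2]))
  rw [hchord]
  linarith

lemma quadratic_ge_left_endpoint (ha : 0 ≤ a) (hb : 2 * a ≤ b) (hx : x ∈ Icc (-1 : K) 1) :
    a - b + c ≤ a * x ^ 2 + b * x + c := by
  have hfactor : a * x ^ 2 + b * x + c - (a - b + c) = (x + 1) * (b - a * (1 - x)) := by ring
  have hslope : a * (1 - x) ≤ b := by nlinarith [mul_nonneg ha (by linarith [hx.1] : 0 ≤ 1 + x)]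
  linarith [mul_nonneg (by linarith [hx.1] : 0 ≤ x + 1) (sub_nonneg.2 hslope)]

lemma quadratic_ge_right_endpoint (ha : 0 ≤ a) (hb : b ≤ -(2 * a)) (hx : x ∈ Icc (-1 : K) 1) :
    a + b + c ≤ a * x ^ 2 + b * x + c := by
  have := quadratic_ge_left_endpoint (c := c) ha (by linarith : 2 * a ≤ -b) (x := -x)
    ⟨by linarith [hx.2], by linarith [hx.1]⟩
  linarith [show a * (-x) ^ 2 + -b * -x = a * x ^ 2 + b * x by ring]

lemma quadratic_nonneg_of_discrim_nonpos (ha : 0 < a) (hd : discrim a b c ≤ 0) (x : K) :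
    0 ≤ a * x ^ 2 + b * x + c := by
  have h4 := four_mul_quadratic_eq a b c x
  nlinarith [sq_nonneg (2 * a * x + b)]

lemma discrim_nonpos_of_nonneg_at_vertex (ha : 0 < a)
    (h : 0 ≤ a * (-b / (2 * a)) ^ 2 + b * (-b / (2 * a)) + c) : discrim a b c ≤ 0 := by
  have := four_mul_quadratic_eq a b c (-b / (2 * a))
  rw [show 2 * a * (-b / (2 * a)) + b = 0 by field_simp; ring] at this
  nlinarith [mul_nonneg ha.le h]

theorem quadratic_nonneg_on_Icc_iff (a b c : K) :
    (∀ x ∈ Icc (-1 : K) 1, 0 ≤ a * x ^ 2 + b * x + c) ↔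
      0 ≤ a + b + c ∧ 0 ≤ a - b + c ∧ (2 * a ≤ |b| ∨ discrim a b c ≤ 0) := by
  constructor
  · intro h
    refine ⟨by simpa using h 1 (by simp), by simpa [sub_eq_add_neg] using h (-1) (by simp), ?_⟩
    refine or_iff_not_imp_left.2 fun hb => ?_
    have ha : 0 < a := by linarith [abs_nonneg b]
    have hvertex : -b / (2 * a) ∈ Icc (-1 : K) 1 := by
      rw [mem_Icc, le_div_iff₀ (by positivity), div_le_iff₀ (by positivity)]
      constructor <;> linarith [neg_abs_le b, le_abs_self b]
    exact discrim_nonpos_of_nonneg_at_vertex ha (h _ hvertex)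
  · rintro ⟨h₁, h₂, hb | hd⟩ x hx <;> rcases le_or_gt a 0 with ha | ha
    · exact quadratic_nonneg_on_Icc_of_nonpos ha h₁ h₂ hx
    · rcases le_abs'.1 hb with hb | hb
      · linarith [quadratic_ge_right_endpoint (c := c) ha.le hb hx]
      · linarith [quadratic_ge_left_endpoint (c := c) ha.le hb hx]
    · exact quadratic_nonneg_on_Icc_of_nonpos ha h₁ h₂ hx
    · exact quadratic_nonneg_of_discrim_nonpos ha hd x

end OrderedField

/-- The quadratic `q_{α,β}(x) = αx² + 2βx + 1 − (2/3)α` is nonnegative on `[−1,1]`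
iff both `2|β| ≤ 1 + α/3` and (`α ≤ |β|` or `β² ≤ α − (2/3)α²`). -/
theorem stmt_4 (α β : ℝ) :
    (∀ x ∈ Set.Icc (-1 : ℝ) 1, 0 ≤ α * x ^ 2 + 2 * β * x + 1 - 2 / 3 * α) ↔
    (2 * |β| ≤ 1 + α / 3 ∧ (α ≤ |β| ∨ β ^ 2 ≤ α - 2 / 3 * α ^ 2)) := by
  have hends : (0 ≤ α + 2 * β + (1 - 2 / 3 * α) ∧ 0 ≤ α - 2 * β + (1 - 2 / 3 * α)) ↔
      2 * |β| ≤ 1 + α / 3 := by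
    rw [← le_div_iff₀' two_pos, abs_le]
    constructor <;> rintro ⟨h, h'⟩ <;> constructor <;> linarith
  have hcases : (2 * α ≤ 2 * |β| ∨ (2 * β) ^ 2 - 4 * α * (1 - 2 / 3 * α) ≤ 0) ↔
      (α ≤ |β| ∨ β ^ 2 ≤ α - 2 / 3 * α ^ 2) :=
    or_congr (by constructor <;> intro <;> linarith) (by constructor <;> intro <;> linarith)
  simp only [add_sub_assoc, quadratic_nonneg_on_Icc_iff, discrim, abs_mul, abs_two]
  rw [← and_assoc, hends, hcases]
end

section
/- Let n be a finite nonempty index type, G an n × n matrix over ℝ, and c, t, T, T' real numbers. Let A = G_ℂ + (ic)·I, where G_ℂ is the entrywise complexification of G and I is the identity matrix, and assume A is invertible. Then ∫_T^{T'} cos(cu) · exp((u − t)·G) du equals the entrywise real part of e^{ict} · A⁻¹ · (exp((T' − t)·A) − exp((T − t)·A)), where exp denotes the matrix exponential (over ℝ on the left side, over ℂ on the right side) and the integral is taken entrywise. -/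
/-!
With `A = G_ℂ + icI`, the scalar part `icI` is central, so
`e^{ict} exp((u - t)A) = e^{icu} exp((u - t)G)_ℂ`, whose `(i, j)` entry has real part
`cos(cu) exp((u - t)G)ᵢⱼ`. Hence the integrand is the real part of an entry of
`e^{ict} A⁻¹ · A exp((u - t)A)`, and `A exp((u - t)A)` is the derivative of `exp((u - t)A)`.
-/

open NormedSpace

section BanachAlgebra

variable {𝔸 : Type*} [NormedRing 𝔸] [NormedAlgebra ℝ 𝔸] [CompleteSpace 𝔸]

theorem hasDerivAt_exp_sub_smul (a : 𝔸) (t u : ℝ) :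
    HasDerivAt (fun v : ℝ => exp ((v - t) • a)) (a * exp ((u - t) • a)) u :=
  (hasDerivAt_exp_smul_const' a (u - t)).comp_sub_const u t

theorem integral_mul_exp_sub_smul (a : 𝔸) (t T T' : ℝ) :
    ∫ u in T..T', a * exp ((u - t) • a) = exp ((T' - t) • a) - exp ((T - t) • a) := by
  have hcont : Continuous fun u : ℝ => exp ((u - t) • a) :=
    continuous_iff_continuousAt.2 fun u => (hasDerivAt_exp_sub_smul a t u).continuousAt
  exact intervalIntegral.integral_eq_sub_of_hasDerivAt
    (fun u _ => hasDerivAt_exp_sub_smul a t u) ((hcont.const_mul a).intervalIntegrable _ _)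

end BanachAlgebra

theorem exp_add_algebraMap {𝕂 𝔸 : Type*} [RCLike 𝕂] [NormedRing 𝔸] [NormedAlgebra 𝕂 𝔸]
    [NormedAlgebra ℚ 𝔸] [CompleteSpace 𝔸] (x : 𝔸) (z : 𝕂) :
    exp (x + algebraMap 𝕂 𝔸 z) = exp z • exp x := by
  rw [exp_add_of_commute (Algebra.commutes z x).symm, ← algebraMap_exp_comm, ← Algebra.commutes,
    ← Algebra.smul_def]

namespace Matrix

attribute [local instance] Matrix.linftyOpSemiNormedRing Matrix.linftyOpNormedRing
  Matrix.linftyOpNormedAlgebra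

variable {n : Type*} [Fintype n] [DecidableEq n]

theorem exp_map_ofReal (M : Matrix n n ℝ) :
    exp (M.map Complex.ofReal) = (exp M).map Complex.ofReal :=
  (map_exp Complex.ofRealHom.mapMatrix (continuous_id.matrix_map Complex.continuous_ofReal) M).symm

theorem exp_smul_map_ofReal_add_smul_one (G : Matrix n n ℝ) (w : ℂ) (s : ℝ) :
    exp (s • (G.map Complex.ofReal + w • 1)) =
      Complex.exp (s * w) • (exp (s • G)).map Complex.ofReal := by
  have hsplit : s • (G.map Complex.ofReal + w • 1) =
      (s • G).map Complex.ofReal + algebraMap ℂ (Matrix n n ℂ) (s * w) := by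
    ext i j
    simp [algebraMap_eq_diagonal, one_apply, diagonal_apply, Complex.real_smul]
  rw [hsplit, ← exp_map_ofReal, Complex.exp_eq_exp_ℂ]
  exact exp_add_algebraMap _ _

end Matrix

theorem stmt_11_general {n : Type*} [Fintype n] [DecidableEq n]
    (G : Matrix n n ℝ) (c t T T' : ℝ)
    (A : Matrix n n ℂ)
    (hAdef : A = G.map (Complex.ofReal) + (Complex.I * c) • (1 : Matrix n n ℂ))
    (hA : IsUnit A) (i j : n) :
    ∫ u in T..T', Real.cos (c * u) * (exp ((u - t) • G)) i j =
      ((Complex.exp (Complex.I * c * t) •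
        (A⁻¹ * (exp ((T' - t) • A) - exp ((T - t) • A)))) i j).re := by
  -- Any norm will do: all of them induce the product topology used by `exp` in the statement.
  let := Matrix.linftyOpNormedRing (n := n) (α := ℂ)
  let := Matrix.linftyOpNormedAlgebra (n := n) (R := ℝ) (α := ℂ)
  let := Matrix.linftyOpNormedAlgebra (n := n) (R := ℚ) (α := ℂ)
  have hinv : A⁻¹ * A = 1 := Matrix.nonsing_inv_mul A ((Matrix.isUnit_iff_isUnit_det A).mp hA)
  let B := Complex.exp (Complex.I * c * t) • A⁻¹
  let L : Matrix n n ℂ →L[ℝ] ℝ := Complex.reCLM ∘L ContinuousLinearMap.proj j ∘L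
    ContinuousLinearMap.proj (R := ℝ) (φ := fun _ : n => n → ℂ) i ∘L
    ContinuousLinearMap.mul ℝ _ B
  have hL_apply (M : Matrix n n ℂ) : L M = ((B * M) i j).re := rfl
  have hintegrand (u : ℝ) :
      Real.cos (c * u) * (exp ((u - t) • G)) i j = L (A * exp ((u - t) • A)) := by
    have hB : B * (A * exp ((u - t) • A)) =
        Complex.exp ((c * u : ℝ) * Complex.I) • (exp ((u - t) • G)).map Complex.ofReal := by
      rw [← mul_assoc, smul_mul_assoc, hinv, smul_mul_assoc, one_mul, hAdef,
        Matrix.exp_smul_map_ofReal_add_smul_one, smul_smul, ← Complex.exp_add]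
      congr 2
      push_cast
      ring
    rw [hL_apply, hB, Matrix.smul_apply, Matrix.map_apply, smul_eq_mul, Complex.re_mul_ofReal,
      Complex.exp_ofReal_mul_I_re]
  calc ∫ u in T..T', Real.cos (c * u) * (exp ((u - t) • G)) i j
      = ∫ u in T..T', L (A * exp ((u - t) • A)) := by simp_rw [hintegrand]
    _ = L (∫ u in T..T', A * exp ((u - t) • A)) :=
        L.intervalIntegral_comp_comm ((by fun_prop : Continuous _).intervalIntegrable T T')
    _ = L (exp ((T' - t) • A) - exp ((T - t) • A)) :=
        congrArg L (integral_mul_exp_sub_smul A t T T')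
    _ = _ := congrArg (fun M : Matrix n n ℂ => (M i j).re) (smul_mul_assoc _ _ _)

/-- With `A = G_ℂ + (ic)·I` invertible, the entrywise integral
`∫_T^{T'} cos(cu) exp((u − t)G) du` equals the entrywise real part of
`e^{ict} A⁻¹ (exp((T' − t)A) − exp((T − t)A))`. -/
theorem stmt_11 {n : Type*} [Fintype n] [DecidableEq n] [Nonempty n]
    (G : Matrix n n ℝ) (c t T T' : ℝ)
    (A : Matrix n n ℂ)
    (hAdef : A = G.map (Complex.ofReal) + (Complex.I * c) • (1 : Matrix n n ℂ))
    (hA : IsUnit A) (i j : n) :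
    ∫ u in T..T', Real.cos (c * u) * (exp ((u - t) • G)) i j =
      ((Complex.exp (Complex.I * c * t) •
        (A⁻¹ * (exp ((T' - t) • A) - exp ((T - t) • A)))) i j).re :=
  stmt_11_general G c t T T' A hAdef hA i j
end

section
/- Let (Ω, F, P) be a probability space and X: Ω → ℝ a random variable with X ≥ 0 almost surely and such that X^j is integrable for every 1 ≤ j ≤ n. Let Φ(x) = Σ_{j=0}^n a_j x^j be a real polynomial that is monotone nondecreasing on [0, ∞), and let k ≥ 0. Then E[max(Φ(X) − Φ(k), 0)] = Σ_{j=1}^n a_j · E[max(X^j − k^j, 0)]. -/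
open MeasureTheory

/-!
When `X ≤ k`, monotonicity of `Φ` and of the powers `x ↦ x ^ j` on `[0, ∞)` makes every positive
part vanish; when `X ≥ k` no positive part is truncated, and the claim is the linearity of the
increment `Φ(X) - Φ(k) = Σ_{j ≥ 1} a_j (X^j - k^j)` (the constant term cancels). Hence the payoffs
agree pointwise, and the prices agree by linearity of the integral.
-/

theorem max_sub_zero_eq_sum_of_monotoneOn {α ι : Type*} [LinearOrder α] {s : Set α}
    {f : α → ℝ} {g : ι → α → ℝ} {c : ι → ℝ} {t : Finset ι}
    (hf : MonotoneOn f s) (hg : ∀ i ∈ t, MonotoneOn (g i) s) {x y : α} (hx : x ∈ s) (hy : y ∈ s)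
    (h : f x - f y = ∑ i ∈ t, c i * (g i x - g i y)) :
    max (f x - f y) 0 = ∑ i ∈ t, c i * max (g i x - g i y) 0 := by
  rcases le_total x y with hxy | hyx
  · rw [max_eq_right (sub_nonpos.2 (hf hx hy hxy))]
    refine (Finset.sum_eq_zero fun i hi => ?_).symm
    rw [max_eq_right (sub_nonpos.2 (hg i hi hx hy hxy)), mul_zero]
  · rw [max_eq_left (sub_nonneg.2 (hf hy hx hyx)), h]
    refine Finset.sum_congr rfl fun i hi => ?_
    rw [max_eq_left (sub_nonneg.2 (hg i hi hy hx hyx))]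

theorem sum_range_mul_pow_sub_sum_range_mul_pow {R : Type*} [CommRing R] (a : ℕ → R) (n : ℕ)
    (x y : R) :
    ∑ j ∈ Finset.range (n + 1), a j * x ^ j - ∑ j ∈ Finset.range (n + 1), a j * y ^ j =
      ∑ j ∈ Finset.Icc 1 n, a j * (x ^ j - y ^ j) := by
  rw [← Finset.sum_sub_distrib, Finset.range_eq_Ico,
    Finset.sum_eq_sum_Ico_succ_bot (Nat.zero_lt_succ n), zero_add,
    Nat.succ_eq_add_one, Finset.Ico_add_one_right_eq_Icc]
  simp [mul_sub]

/-- If `X ≥ 0` a.s. with integrable powers up to degree `n`, and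
`Φ(x) = Σ_{j=0}^n a_j x^j` is monotone nondecreasing on `[0,∞)`, then for `k ≥ 0`,
`E[(Φ(X) − Φ(k))₊] = Σ_{j=1}^n a_j E[(X^j − k^j)₊]`. -/
theorem stmt_16 {Ω : Type*} [MeasureSpace Ω] [IsProbabilityMeasure (volume : Measure Ω)]
    (X : Ω → ℝ) (hX : ∀ᵐ ω ∂(volume : Measure Ω), 0 ≤ X ω)
    (n : ℕ) (hint : ∀ j, 1 ≤ j → j ≤ n → Integrable (fun ω => X ω ^ j) (volume : Measure Ω))
    (a : ℕ → ℝ) (Φ : ℝ → ℝ)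
    (hΦdef : ∀ x, Φ x = ∑ j ∈ Finset.range (n + 1), a j * x ^ j)
    (hmono : MonotoneOn Φ (Set.Ici 0))
    (k : ℝ) (hk : 0 ≤ k) :
    (∫ ω, max (Φ (X ω) - Φ k) 0) =
      ∑ j ∈ Finset.Icc 1 n, a j * ∫ ω, max (X ω ^ j - k ^ j) 0 := by
  have payoff_eq : ∀ᵐ ω ∂(volume : Measure Ω),
      max (Φ (X ω) - Φ k) 0 = ∑ j ∈ Finset.Icc 1 n, a j * max (X ω ^ j - k ^ j) 0 := by
    filter_upwards [hX] with ω hXω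
    refine max_sub_zero_eq_sum_of_monotoneOn (g := fun j u => u ^ j) hmono
      (fun j _ => pow_left_monotoneOn) hXω hk ?_
    rw [hΦdef, hΦdef, sum_range_mul_pow_sub_sum_range_mul_pow]
  have integrable_term : ∀ j ∈ Finset.Icc 1 n,
      Integrable (fun ω => a j * max (X ω ^ j - k ^ j) 0) (volume : Measure Ω) := fun j hj =>
    let ⟨h1, h2⟩ := Finset.mem_Icc.1 hj
    ((hint j h1 h2).sub (integrable_const _)).pos_part.const_mul _
  rw [integral_congr_ae payoff_eq, integral_finsetSum _ integrable_term]
  simp only [integral_const_mul]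
end
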